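/- arXiv:2510.02633 — 4 statements merged into one kernel-verified Lean document; each statement's English description precedes it below -/
import Mathlib

section
/- Let f : ℝ → ℝ be a real-valued characteristic function of a probability measure on ℝ (i.e., f(s) = E[cos(sξ)] for a symmetric real random variable ξ, equivalently f is continuous, f(0)=1, and f is positive definite) satisfying f(2s) = f(s)² · (f(2s)+1)/2 for all s ∈ ℝ. Then there exists a real number σ such that f(s) = 2/(e^{σs} + e^{-σs}) for all s ∈ ℝ. -/
/-!
Write `f = 1 / cosh H` with `H = arcosh (1 / f) ≥ 0`. In terms of `1 / f` the functional equation
is the duplication formula `cosh 2t = 2 cosh² t - 1`, so `H (2s) = 2 H(s)`; this needs `f > 0`,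
which holds because a zero of `f` would propagate to `s / 2ⁿ → 0`, where `f → 1`.
Along `uₙ = s / 2ⁿ` we then get `(1 - f uₙ) / uₙ² → (H(s) / s)² / 2`. Since `f` is a cosine
transform, Fatou's lemma turns this limit into a finite second moment `V`, and dominated convergence
identifies it as `V / 2`. Hence `H(s) = √V |s|` for every `s`.
-/

open MeasureTheory Real Filter Topology

lemma tendsto_sq_comp_mul_div_sq {φ : ℝ → ℝ} (hφ : HasDerivAt φ 1 0) (hφ0 : φ 0 = 0) (c : ℝ) :
    Tendsto (fun u => φ (c * u) ^ 2 / u ^ 2) (𝓝[≠] 0) (𝓝 (c ^ 2)) := by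
  have hc : HasDerivAt (fun u => φ (c * u)) (1 * (c * 1)) 0 :=
    (mul_zero c ▸ hφ).comp 0 ((hasDerivAt_id 0).const_mul c)
  rw [one_mul, mul_one] at hc
  refine (hc.tendsto_slope_zero.pow 2).congr fun u => ?_
  simp only [zero_add, mul_zero, hφ0, sub_zero, smul_eq_mul]
  ring

lemma tendsto_one_sub_cos_mul_div_sq (x : ℝ) :
    Tendsto (fun u => (1 - cos (u * x)) / u ^ 2) (𝓝[≠] 0) (𝓝 (x ^ 2 / 2)) := by
  have h := (tendsto_sq_comp_mul_div_sq (by simpa using hasDerivAt_sin 0) sin_zero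
    (x / 2)).const_mul 2
  rw [show 2 * (x / 2) ^ 2 = x ^ 2 / 2 by ring] at h
  refine h.congr fun u => ?_
  rw [show u * x = 2 * (x / 2 * u) by ring, cos_two_mul, cos_sq']
  ring

lemma tendsto_one_sub_inv_cosh_mul_div_sq (a : ℝ) :
    Tendsto (fun u => (1 - (cosh (a * u))⁻¹) / u ^ 2) (𝓝[≠] 0) (𝓝 (a ^ 2 / 2)) := by
  have hsinh := (tendsto_sq_comp_mul_div_sq (by simpa using hasDerivAt_sinh 0) sinh_zero
    (a / 2)).const_mul 2
  have hcosh : Tendsto (fun u => cosh (a * u)) (𝓝[≠] 0) (𝓝 1) :=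
    ((by fun_prop : Continuous fun u => cosh (a * u)).tendsto' 0 1 (by simp)).mono_left
      nhdsWithin_le_nhds
  have hlim := hsinh.div hcosh one_ne_zero
  rw [show 2 * (a / 2) ^ 2 / 1 = a ^ 2 / 2 by ring] at hlim
  refine hlim.congr fun u => ?_
  have h : cosh (a * u) = 2 * sinh (a / 2 * u) ^ 2 + 1 := by
    rw [show a * u = 2 * (a / 2 * u) by ring, cosh_two_mul, cosh_sq]; ring
  have hpos : 0 < 2 * sinh (a / 2 * u) ^ 2 + 1 := by positivity
  rw [Pi.div_apply, h]
  field_simp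
  ring

lemma tendsto_div_two_pow_nhds_zero (s : ℝ) : Tendsto (fun n : ℕ => s / 2 ^ n) atTop (𝓝 0) :=
  tendsto_const_nhds.div_atTop (tendsto_pow_atTop_atTop_of_one_lt one_lt_two)

lemma tendsto_div_two_pow_nhdsNE_zero {s : ℝ} (hs : s ≠ 0) :
    Tendsto (fun n : ℕ => s / 2 ^ n) atTop (𝓝[≠] 0) :=
  tendsto_nhdsWithin_iff.2 ⟨tendsto_div_two_pow_nhds_zero s, .of_forall fun n => by simp [hs]⟩

lemma apply_div_two_pow_of_apply_two_mul {H : ℝ → ℝ} (hH : ∀ s, H (2 * s) = 2 * H s) (s : ℝ)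
    (n : ℕ) : H (s / 2 ^ n) = H s / 2 ^ n := by
  have hhalf : ∀ s, H (s / 2) = H s / 2 := fun s => by
    rw [eq_div_iff two_ne_zero, mul_comm, ← hH, mul_div_cancel₀ _ two_ne_zero]
  induction n generalizing s with
  | zero => simp
  | succ n ih => rw [pow_succ', ← div_div, ← div_div, ih, hhalf]

section CosineTransform

variable (μ : Measure ℝ)

lemma integrable_cos_mul [IsFiniteMeasure μ] (s : ℝ) : Integrable (fun x => cos (s * x)) μ :=
  .of_bound (by fun_prop) 1 (ae_of_all _ fun x => abs_cos_le_one _)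

lemma continuous_integral_cos_mul [IsFiniteMeasure μ] :
    Continuous fun s => ∫ x, cos (s * x) ∂μ :=
  continuous_of_dominated (fun s => by fun_prop) (fun s => ae_of_all _ fun x => abs_cos_le_one _)
    (integrable_const 1) (ae_of_all _ fun x => by fun_prop)

variable [IsProbabilityMeasure μ]

lemma abs_integral_cos_mul_le_one (s : ℝ) : |∫ x, cos (s * x) ∂μ| ≤ 1 := by
  simpa using norm_integral_le_of_norm_le_const (μ := μ) (f := fun x => cos (s * x)) (C := 1)
    (ae_of_all _ fun x => abs_cos_le_one (s * x))

lemma integral_one_sub_cos_mul (s : ℝ) :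
    ∫ x, (1 - cos (s * x)) ∂μ = 1 - ∫ x, cos (s * x) ∂μ := by
  rw [integral_sub (integrable_const 1) (integrable_cos_mul μ s)]
  simp

variable {μ} {u : ℕ → ℝ} {L : ℝ}

lemma integrable_sq_of_tendsto_one_sub_integral_cos (hu : Tendsto u atTop (𝓝[≠] 0))
    (hL : Tendsto (fun n => (1 - ∫ x, cos (u n * x) ∂μ) / u n ^ 2) atTop (𝓝 L)) :
    Integrable (fun x => x ^ 2) μ := by
  set g : ℕ → ℝ → ℝ := fun n x => (1 - cos (u n * x)) / u n ^ 2
  have hg_nonneg : ∀ n x, 0 ≤ g n x := fun n x =>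
    div_nonneg (sub_nonneg.2 (cos_le_one _)) (sq_nonneg _)
  have hg_lintegral : ∀ n, ∫⁻ x, ENNReal.ofReal (g n x) ∂μ
      = ENNReal.ofReal ((1 - ∫ x, cos (u n * x) ∂μ) / u n ^ 2) := fun n => by
    rw [← ofReal_integral_eq_lintegral_ofReal, integral_div, integral_one_sub_cos_mul]
    · exact ((integrable_const 1).sub (integrable_cos_mul μ _)).div_const _
    · exact ae_of_all _ (hg_nonneg n)
  have hg_lim : ∀ x, Tendsto (fun n => ENNReal.ofReal (g n x)) atTop
      (𝓝 (ENNReal.ofReal (x ^ 2 / 2))) := fun x =>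
    ENNReal.tendsto_ofReal ((tendsto_one_sub_cos_mul_div_sq x).comp hu)
  have hfatou : ∫⁻ x, ENNReal.ofReal (x ^ 2 / 2) ∂μ ≤ ENNReal.ofReal L := calc
    ∫⁻ x, ENNReal.ofReal (x ^ 2 / 2) ∂μ = ∫⁻ x, liminf (fun n => ENNReal.ofReal (g n x)) atTop ∂μ :=
      lintegral_congr fun x => (hg_lim x).liminf_eq.symm
    _ ≤ liminf (fun n => ∫⁻ x, ENNReal.ofReal (g n x) ∂μ) atTop :=
      lintegral_liminf_le fun n => by fun_prop
    _ = ENNReal.ofReal L := by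
      simp_rw [hg_lintegral]
      exact (ENNReal.tendsto_ofReal hL).liminf_eq
  have h_half : Integrable (fun x => x ^ 2 / 2) μ :=
    ⟨by fun_prop, (hasFiniteIntegral_iff_ofReal (ae_of_all _ fun x => by positivity)).2
      (hfatou.trans_lt ENNReal.ofReal_lt_top)⟩
  simpa using h_half.mul_const 2

lemma integral_sq_eq_of_tendsto_one_sub_integral_cos (hu : Tendsto u atTop (𝓝[≠] 0))
    (hL : Tendsto (fun n => (1 - ∫ x, cos (u n * x) ∂μ) / u n ^ 2) atTop (𝓝 L)) :
    ∫ x, x ^ 2 ∂μ = 2 * L := by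
  have hdom : Tendsto (fun n => ∫ x, (1 - cos (u n * x)) / u n ^ 2 ∂μ) atTop
      (𝓝 (∫ x, x ^ 2 / 2 ∂μ)) := by
    refine tendsto_integral_of_dominated_convergence (fun x => x ^ 2 / 2) (fun n => by fun_prop)
      ((integrable_sq_of_tendsto_one_sub_integral_cos hu hL).div_const 2)
      (fun n => ae_of_all _ fun x => ?_)
      (ae_of_all _ fun x => (tendsto_one_sub_cos_mul_div_sq x).comp hu)
    rw [Real.norm_of_nonneg (div_nonneg (sub_nonneg.2 (cos_le_one _)) (sq_nonneg _))]
    refine div_le_of_le_mul₀ (sq_nonneg _) (by positivity) ?_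
    linarith [one_sub_sq_div_two_le_cos (x := u n * x)]
  simp_rw [integral_div, integral_one_sub_cos_mul] at hdom
  linarith [tendsto_nhds_unique hdom hL]

lemma eq_abs_sqrt_integral_sq_mul_of_integral_cos_eq_inv_cosh {H : ℝ → ℝ}
    (hH : ∀ s, H (2 * s) = 2 * H s) (hH_nonneg : ∀ s, 0 ≤ H s)
    (hμH : ∀ s, ∫ x, cos (s * x) ∂μ = (cosh (H s))⁻¹) (s : ℝ) :
    H s = |√(∫ x, x ^ 2 ∂μ) * s| := by
  rw [abs_mul, abs_of_nonneg (sqrt_nonneg _)]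
  rcases eq_or_ne s 0 with rfl | hs
  · simp only [abs_zero, mul_zero]
    linarith [show H 0 = 2 * H 0 by simpa using hH 0]
  have hlim : Tendsto (fun n : ℕ => (1 - ∫ x, cos (s / 2 ^ n * x) ∂μ) / (s / 2 ^ n) ^ 2) atTop
      (𝓝 ((H s / s) ^ 2 / 2)) := by
    refine ((tendsto_one_sub_inv_cosh_mul_div_sq (H s / s)).comp
      (tendsto_div_two_pow_nhdsNE_zero hs)).congr fun n => ?_
    rw [Function.comp_apply, hμH, apply_div_two_pow_of_apply_two_mul hH]
    field_simp
  rw [integral_sq_eq_of_tendsto_one_sub_integral_cos (tendsto_div_two_pow_nhdsNE_zero hs) hlim,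
    mul_div_cancel₀ _ two_ne_zero, sqrt_sq_eq_abs, abs_div, div_mul_cancel₀ _ (abs_ne_zero.2 hs),
    abs_of_nonneg (hH_nonneg s)]

end CosineTransform

section Doubling

variable {f : ℝ → ℝ}

lemma pos_of_doubling_identity (hcont : ContinuousAt f 0) (hf0 : f 0 = 1)
    (hbound : ∀ s, |f s| ≤ 1) (hdouble : ∀ s, f (2 * s) * (2 - f s ^ 2) = f s ^ 2) (s : ℝ) :
    0 < f s := by
  have hhalf : ∀ s, f s * (2 - f (s / 2) ^ 2) = f (s / 2) ^ 2 := fun s => by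
    simpa [mul_div_cancel₀] using hdouble (s / 2)
  have hgap : ∀ s, 0 < 2 - f s ^ 2 := fun s => by
    nlinarith [abs_le.1 (hbound s)]
  have hnonneg : 0 ≤ f s := nonneg_of_mul_nonneg_left ((hhalf s).symm ▸ sq_nonneg _) (hgap _)
  refine hnonneg.lt_of_ne fun hzero => ?_
  have hvanish : ∀ n : ℕ, f (s / 2 ^ n) = 0 := fun n => by
    induction n with
    | zero => simpa using hzero.symm
    | succ n ih =>
      have := hhalf (s / 2 ^ n)
      rw [ih, zero_mul, eq_comm, sq_eq_zero_iff, div_div, ← pow_succ] at this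
      exact this
  have hlim := hcont.tendsto.comp (tendsto_div_two_pow_nhds_zero s)
  simp [Function.comp_def, hvanish, hf0] at hlim

lemma arcosh_inv_eq_two_mul {y z : ℝ} (hy : 0 < y) (hy1 : y ≤ 1)
    (h : z * (2 - y ^ 2) = y ^ 2) : arcosh z⁻¹ = 2 * arcosh y⁻¹ := by
  have hone : 1 ≤ y⁻¹ := (one_le_inv₀ hy).2 hy1
  have hz : z = y ^ 2 / (2 - y ^ 2) := by
    rw [eq_div_iff (by nlinarith)]
    exact h
  have hcosh : z⁻¹ = cosh (2 * arcosh y⁻¹) := by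
    rw [cosh_two_mul, sinh_sq, cosh_arcosh hone, hz]
    field_simp
    ring
  rw [hcosh, arcosh_cosh (mul_nonneg zero_le_two (arcosh_nonneg hone))]

end Doubling

theorem stmt0_general (f : ℝ → ℝ) (μ : Measure ℝ) [IsProbabilityMeasure μ]
    (hf : ∀ s : ℝ, f s = ∫ x, Real.cos (s * x) ∂μ)
    (heq : ∀ s : ℝ, f (2 * s) = f s ^ 2 * ((f (2 * s) + 1) / 2)) :
    ∃ σ : ℝ, ∀ s : ℝ, f s = 2 / (Real.exp (σ * s) + Real.exp (-(σ * s))) := by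
  have hdouble : ∀ s, f (2 * s) * (2 - f s ^ 2) = f s ^ 2 := fun s => by
    linear_combination 2 * heq s
  have hbound : ∀ s, |f s| ≤ 1 := fun s => hf s ▸ abs_integral_cos_mul_le_one μ s
  have hpos := pos_of_doubling_identity ((funext hf ▸ continuous_integral_cos_mul μ).continuousAt)
    (by simp [hf]) hbound hdouble
  have hone : ∀ s, 1 ≤ (f s)⁻¹ := fun s => (one_le_inv₀ (hpos s)).2 (abs_le.1 (hbound s)).2
  set H : ℝ → ℝ := fun s => arcosh (f s)⁻¹
  have hfH : ∀ s, f s = (cosh (H s))⁻¹ := fun s => by rw [cosh_arcosh (hone s), inv_inv]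
  have hH : ∀ s, H (2 * s) = 2 * H s := fun s =>
    arcosh_inv_eq_two_mul (hpos s) (abs_le.1 (hbound s)).2 (hdouble s)
  refine ⟨√(∫ x, x ^ 2 ∂μ), fun s => ?_⟩
  rw [hfH, eq_abs_sqrt_integral_sq_mul_of_integral_cos_eq_inv_cosh hH
    (fun s => arcosh_nonneg (hone s)) (fun s => (hf s).symm.trans (hfH s)) s, cosh_abs, cosh_eq,
    inv_div]

/-- If a real-valued characteristic function `f` of a symmetric probability measure on `ℝ`
satisfies `f(2s) = f(s)² (f(2s)+1)/2`, then `f` is the characteristic function of a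
hyperbolic secant distribution: `f(s) = 2/(e^{σs}+e^{-σs})` for some real `σ`. -/
theorem stmt0 (f : ℝ → ℝ) (μ : Measure ℝ) [IsProbabilityMeasure μ]
    (hsymm : μ.map (fun x => -x) = μ)
    (hf : ∀ s : ℝ, f s = ∫ x, Real.cos (s * x) ∂μ)
    (heq : ∀ s : ℝ, f (2 * s) = f s ^ 2 * ((f (2 * s) + 1) / 2)) :
    ∃ σ : ℝ, ∀ s : ℝ, f s = 2 / (Real.exp (σ * s) + Real.exp (-(σ * s))) :=
  stmt0_general f μ hf heq
end

section
/- Let H be a discrete abelian group, let f : H → ℂ be a positive definite function with f(0) = 1, and suppose L is a finite subgroup of H such that |f(y)| = 1 for all y ∈ L. Then the restriction of f to L is a character of L (i.e., f(y₁+y₂) = f(y₁)f(y₂) for y₁, y₂ ∈ L). -/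
open scoped ComplexOrder

/-- A function `f` on an abelian group is positive definite if all the usual
Hermitian quadratic sums are nonnegative (in the complex order). -/
def IsPositiveDefiniteFn {Y : Type*} [AddCommGroup Y] (f : Y → ℂ) : Prop :=
  ∀ (n : ℕ) (y : Fin n → Y) (c : Fin n → ℂ),
    0 ≤ ∑ i, ∑ j, c i * (starRingEnd ℂ) (c j) * f (y i - y j)

/-!
Write `a = f x`, `b = f y`, `w = f (x - y)` with `|a| = |b| = 1`. Testing positive definiteness
at the points `x, y, 0` with weights `conj a, conj b, -2` gives `2 Re (conj a * b * w) - 2 ≥ 0`,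
while `|conj a * b * w| = |w| ≤ 1`; hence `conj a * b * w = 1`, i.e. `f (x - y) = f x * conj (f y)`.
Together with `f (-y) = conj (f y)` this is multiplicativity on the set where `|f| = 1`.
-/

open ComplexConjugate

lemma Complex.eq_one_of_norm_le_one_of_one_le_re {z : ℂ} (hnorm : ‖z‖ ≤ 1) (hre : 1 ≤ z.re) :
    z = 1 := by
  have hsq : z.re * z.re + z.im * z.im ≤ 1 := by
    rw [← Complex.normSq_apply, ← Complex.sq_norm]
    nlinarith [norm_nonneg z]
  apply Complex.ext <;> simp only [Complex.one_re, Complex.one_im] <;> nlinarith [sq_nonneg z.im]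

lemma Complex.mul_conj_of_norm_eq_one {z : ℂ} (hz : ‖z‖ = 1) : z * conj z = 1 := by
  rw [Complex.mul_conj', hz]
  norm_num

namespace IsPositiveDefiniteFn

variable {Y : Type*} [AddCommGroup Y] {f : Y → ℂ}

lemma two_point (hf : IsPositiveDefiniteFn f) (z : Y) (c : ℂ) :
    0 ≤ c * conj c * f 0 + c * f z + conj c * f (-z) + f 0 := by
  have h := hf 2 ![z, 0] ![c, 1]
  simp only [Fin.sum_univ_two, Matrix.cons_val_zero, Matrix.cons_val_one, sub_self, sub_zero,
    zero_sub, map_one, mul_one, one_mul] at h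
  linear_combination h

lemma apply_zero_nonneg (hf : IsPositiveDefiniteFn f) : 0 ≤ f 0 := by
  simpa using hf.two_point 0 0

lemma apply_neg (hf : IsPositiveDefiniteFn f) (z : Y) : f (-z) = conj (f z) := by
  have him0 := (Complex.nonneg_iff.mp hf.apply_zero_nonneg).2
  have him1 := (Complex.nonneg_iff.mp (hf.two_point z 1)).2
  have himI := (Complex.nonneg_iff.mp (hf.two_point z Complex.I)).2
  simp only [map_one, mul_one, one_mul, Complex.add_im, Complex.conj_I, mul_neg, Complex.I_mul_I,
    neg_neg, neg_mul, Complex.mul_im, Complex.I_re, zero_mul, Complex.I_im, zero_add,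
    Complex.neg_im] at him1 himI
  apply Complex.ext <;> simp only [Complex.conj_re, Complex.conj_im] <;> linarith

lemma norm_le_one (hf : IsPositiveDefiniteFn f) (h0 : f 0 = 1) (z : Y) : ‖f z‖ ≤ 1 := by
  have h := hf.two_point z (-conj (f z))
  rw [hf.apply_neg, h0] at h
  have hform : -conj (f z) * conj (-conj (f z)) * 1 + -conj (f z) * f z
      + conj (-conj (f z)) * conj (f z) + 1 = ((1 - ‖f z‖ ^ 2 : ℝ) : ℂ) := by
    push_cast
    linear_combination (-1 : ℂ) * Complex.conj_mul' (f z)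
  rw [hform, Complex.zero_le_real] at h
  nlinarith [norm_nonneg (f z)]

lemma one_le_re_of_norm_eq_one (hf : IsPositiveDefiniteFn f) (h0 : f 0 = 1) {x y : Y}
    (hx : ‖f x‖ = 1) (hy : ‖f y‖ = 1) : 1 ≤ (conj (f x) * f y * f (x - y)).re := by
  have hform : ∑ i, ∑ j, ![conj (f x), conj (f y), -2] i * conj (![conj (f x), conj (f y), -2] j)
      * f (![x, y, 0] i - ![x, y, 0] j) = ((2 * (conj (f x) * f y * f (x - y)).re - 2 : ℝ) : ℂ) := by
    simp only [Fin.sum_univ_three, Matrix.cons_val_zero, Matrix.cons_val_one, Matrix.cons_val_two,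
      Matrix.head_cons, Matrix.tail_cons, sub_self, sub_zero, zero_sub, h0, ← neg_sub x y,
      hf.apply_neg, Complex.conj_conj, show conj (-2 : ℂ) = -2 by rw [map_neg, map_ofNat]]
    have hre := Complex.add_conj (conj (f x) * f y * f (x - y))
    simp only [map_mul, Complex.conj_conj] at hre
    push_cast at hre ⊢
    linear_combination (-3 : ℂ) * Complex.mul_conj_of_norm_eq_one hx
      - 3 * Complex.mul_conj_of_norm_eq_one hy + hre
  have h := hf 3 ![x, y, 0] ![conj (f x), conj (f y), -2]
  rw [hform, Complex.zero_le_real] at h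
  linarith

lemma apply_sub_of_norm_eq_one (hf : IsPositiveDefiniteFn f) (h0 : f 0 = 1) {x y : Y}
    (hx : ‖f x‖ = 1) (hy : ‖f y‖ = 1) : f (x - y) = f x * conj (f y) := by
  have hnorm : ‖conj (f x) * f y * f (x - y)‖ ≤ 1 := by
    rw [norm_mul, norm_mul, Complex.norm_conj, hx, hy, one_mul, one_mul]
    exact hf.norm_le_one h0 (x - y)
  have hprod := Complex.eq_one_of_norm_le_one_of_one_le_re hnorm
    (hf.one_le_re_of_norm_eq_one h0 hx hy)
  linear_combination (f x * conj (f y)) * hprod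
    - (f y * conj (f y) * f (x - y)) * Complex.mul_conj_of_norm_eq_one hx
    - f (x - y) * Complex.mul_conj_of_norm_eq_one hy

end IsPositiveDefiniteFn

theorem stmt8_general {H : Type*} [AddCommGroup H] (f : H → ℂ)
    (hpd : IsPositiveDefiniteFn f)
    (h0 : f 0 = 1)
    (L : AddSubgroup H)
    (habs : ∀ y ∈ L, ‖f y‖ = 1) :
    ∀ y₁ ∈ L, ∀ y₂ ∈ L, f (y₁ + y₂) = f y₁ * f y₂ := by
  intro y₁ h₁ y₂ h₂
  have hneg : ‖f (-y₂)‖ = 1 := habs _ (L.neg_mem h₂)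
  simpa [hpd.apply_neg] using hpd.apply_sub_of_norm_eq_one h0 (habs y₁ h₁) hneg

/-- If `f` is positive definite on a discrete abelian group `H` with `f(0)=1`, and `L` is a
finite subgroup on which `|f| = 1`, then `f` restricted to `L` is a character. -/
theorem stmt8 {H : Type*} [AddCommGroup H] (f : H → ℂ)
    (hpd : IsPositiveDefiniteFn f)
    (h0 : f 0 = 1)
    (L : AddSubgroup H) (hLfin : (L : Set H).Finite)
    (habs : ∀ y ∈ L, ‖f y‖ = 1) :
    ∀ y₁ ∈ L, ∀ y₂ ∈ L, f (y₁ + y₂) = f y₁ * f y₂ :=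
  stmt8_general f hpd h0 L habs
end

section
/- Let Y be a discrete torsion abelian group containing no elements of order 2 (so multiplication by 2 is an automorphism of Y), and let f : Y → ℝ be a real-valued characteristic function satisfying f(2y) = f(y)² · (f(2y)+1)/2 for all y ∈ Y and {y ∈ Y : f(y)=1} = {0}. Then f(y) = 0 for all y ≠ 0. -/
open scoped ComplexOrder

/-- In a group with no 2-torsion, any torsion element has odd "exponent". -/
lemma odd_exponent {Y : Type*} [AddCommGroup Y] (hno2 : ∀ y : Y, 2 • y = 0 → y = 0) :
    ∀ n : ℕ, 0 < n → ∀ y : Y, n • y = 0 → ∃ q : ℕ, Odd q ∧ 0 < q ∧ q • y = 0 := by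
  intro n
  induction n using Nat.strong_induction_on with
  | _ n ih =>
    intro hn y hny
    rcases Nat.even_or_odd n with he | ho
    · obtain ⟨k, hk⟩ := he
      have hk' : n = 2 * k := by omega
      have hkpos : 0 < k := by omega
      have : 2 • (k • y) = 0 := by
        rw [smul_smul, ← hk']; exact hny
      have hky := hno2 _ this
      exact ih k (by omega) hkpos y hky
    · exact ⟨n, ho, hn, hny⟩

/-- Let `Y` be a discrete torsion abelian group with no elements of order 2, and let
`f : Y → ℝ` be a real-valued characteristic function (positive definite, `f(0)=1`)
satisfying `f(2y) = f(y)² (f(2y)+1)/2` and `{y : f y = 1} = {0}`. Then `f` vanishes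
away from `0`. -/
theorem stmt13 {Y : Type*} [AddCommGroup Y]
    (htor : ∀ y : Y, ∃ n : ℕ, 0 < n ∧ n • y = 0)
    (hno2 : ∀ y : Y, 2 • y = 0 → y = 0)
    (f : Y → ℝ)
    (hpd : IsPositiveDefiniteFn (fun y => (f y : ℂ)))
    (h0 : f 0 = 1)
    (heq : ∀ y : Y, f (2 • y) = f y ^ 2 * ((f (2 • y) + 1) / 2))
    (hone : {y : Y | f y = 1} = {0}) :
    ∀ y : Y, y ≠ 0 → f y = 0 := by
  -- bounds from positive definiteness
  have hb : ∀ z : Y, |f z| ≤ 1 := by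
    intro z
    have hs : f (-z) = f z := by
      have h := hpd 2 ![0, z] ![1, Complex.I]
      simp [Fin.sum_univ_two, Complex.le_def, Complex.ext_iff, h0] at h
      linarith [h]
    have h1 := hpd 2 ![0, z] ![1, 1]
    have h2 := hpd 2 ![0, z] ![1, -1]
    simp [Fin.sum_univ_two, Complex.le_def, Complex.ext_iff, h0, hs] at h1 h2
    rw [abs_le]
    constructor <;> linarith [h1, h2]
  -- explicit doubling formula: f(2z) = f(z)²/(2 - f(z)²)
  have hform : ∀ z : Y, f (2 • z) = f z ^ 2 / (2 - f z ^ 2) := by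
    intro z
    have hbz := hb z
    have hsq : f z ^ 2 ≤ 1 := by
      rw [← sq_abs]; nlinarith [abs_nonneg (f z)]
    have hne : 2 - f z ^ 2 ≠ 0 := by nlinarith
    rw [eq_div_iff hne]
    nlinarith [heq z]
  have hone' : ∀ z : Y, f z = 1 → z = 0 := by
    intro z hz
    have : z ∈ {y : Y | f y = 1} := hz
    rwa [hone] at this
  intro y hy
  -- f y ≠ ±1
  have hy1 : f y ≠ 1 := fun h => hy (hone' y h)
  have hym1 : f y ≠ -1 := by
    intro h
    have h2 : f (2 • y) = 1 := by rw [hform, h]; norm_num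
    exact hy (hno2 y (hone' _ h2))
  have habs : |f y| < 1 := lt_of_le_of_ne (hb y) (by
    intro h
    rcases abs_eq (by norm_num : (0:ℝ) ≤ 1) |>.mp h with h' | h'
    · exact hy1 h'
    · exact hym1 h')
  -- find m ≥ 1 with 2^m • y = y
  obtain ⟨n, hn, hny⟩ := htor y
  obtain ⟨q, hqodd, hqpos, hqy⟩ := odd_exponent hno2 n hn y hny
  set m := Nat.totient q with hm
  have hmpos : 0 < m := Nat.totient_pos.mpr hqpos
  have hdvd : q ∣ 2 ^ m - 1 := by
    have hcop : Nat.Coprime 2 q := Nat.coprime_two_left.mpr hqodd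
    have hmod := Nat.ModEq.pow_totient hcop
    exact (Nat.modEq_iff_dvd' Nat.one_le_two_pow).mp hmod.symm
  have hfix : (2 ^ m) • y = y := by
    obtain ⟨k, hk⟩ := hdvd
    have h2m : 2 ^ m = q * k + 1 := by
      have : 1 ≤ 2 ^ m := Nat.one_le_two_pow
      omega
    rw [h2m, add_nsmul, one_nsmul, mul_nsmul', smul_comm q k y, hqy, smul_zero, zero_add]
  -- iteration bounds
  have hiter : ∀ k : ℕ, 0 ≤ f ((2 ^ (k + 1)) • y) ∧ f ((2 ^ (k + 1)) • y) ≤ f y ^ 2 := by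
    intro k
    induction k with
    | zero =>
      rw [pow_one, hform y]
      have hsq : f y ^ 2 ≥ 0 := sq_nonneg _
      have hsq1 : f y ^ 2 ≤ 1 := by rw [← sq_abs]; nlinarith [abs_nonneg (f y)]
      constructor
      · apply div_nonneg (sq_nonneg _); nlinarith
      · rw [div_le_iff₀ (by nlinarith)]; nlinarith
    | succ k ih =>
      have hstep : (2 ^ (k + 2)) • y = 2 • ((2 ^ (k + 1)) • y) := by
        rw [← mul_nsmul]; ring_nf
      set s := f ((2 ^ (k + 1)) • y) with hs
      have hsq1 : f y ^ 2 ≤ 1 := by rw [← sq_abs]; nlinarith [abs_nonneg (f y)]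
      have hs1 : s ≤ 1 := le_trans ih.2 hsq1
      rw [hstep, hform]
      constructor
      · apply div_nonneg (sq_nonneg _); nlinarith [ih.1]
      · rw [div_le_iff₀ (by nlinarith [ih.1])]
        nlinarith [ih.1, ih.2, sq_nonneg s]
  -- conclude
  obtain ⟨k, hk⟩ : ∃ k : ℕ, m = k + 1 := ⟨m - 1, by omega⟩
  have := hiter k
  rw [← hk, hfix] at this
  have h1 : 0 ≤ f y := this.1
  have h2 : f y ≤ f y ^ 2 := this.2
  have h3 : f y < 1 := lt_of_abs_lt habs
  nlinarith
end

section
/- Let Y be the additive group ℚ₂ of dyadic rational numbers {m/2^n : m ∈ ℤ, n ≥ 0} with the discrete topology, and let g : ℚ₂ → ℝ be a real-valued positive definite function with g(0) = 1, g(1) ≠ 0, satisfying 0 ≤ g(2r) ≤ g(r)² for all r ∈ ℚ₂ with |r| ≤ 1/2. Then g is uniformly continuous on ℚ₂ with respect to the metric induced by the usual absolute value on ℝ. -/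
open scoped ComplexOrder

/-- The set of dyadic rational numbers inside `ℝ`. -/
def dyadicSet : Set ℝ := {x : ℝ | ∃ (m : ℤ) (n : ℕ), x = (m : ℝ) / 2 ^ n}

/-!
Positive definiteness gives `(g x - g y)² ≤ 2 (1 - g (x - y))`, so it suffices to make `1 - g r`
small for small dyadic `r`. Iterating `g (2r) ≤ g(r)²` gives `g (2⁻ⁿ) ≥ g(1) ^ 2⁻ⁿ`, hence
`1 - g (±2⁻ⁿ) ≤ L 2⁻ⁿ` with `L = -log g(1)`. A dyadic `r` with `|r| ≤ 2⁻ⁿ` is joined to `0` by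
steps `±2⁻ᵐ`, at most one for each `m ≥ n`, and by the first inequality a step of size `2⁻ᵐ`
changes `1 - g` by at most `√(2L 2⁻ᵐ)`; summing this geometric series, `1 - g r = O(2^(-n/2))`.
-/

open Filter Topology Real

def IsPosDefOn {G : Type*} [Sub G] (g : G → ℝ) (S : Set G) : Prop :=
  ∀ (n : ℕ) (r : Fin n → G), (∀ i, r i ∈ S) → ∀ c : Fin n → ℂ,
    0 ≤ ∑ i, ∑ j, c i * (starRingEnd ℂ) (c j) * (g (r i - r j) : ℂ)

namespace IsPosDefOn

variable {G : Type*} [AddGroup G] {g : G → ℝ} {S : Set G} (hg : IsPosDefOn g S)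
include hg

theorem sum_sum_mul_nonneg {n : ℕ} {r : Fin n → G} (hr : ∀ i, r i ∈ S) (c : Fin n → ℝ) :
    0 ≤ ∑ i, ∑ j, c i * c j * g (r i - r j) := by
  have h := hg n r hr (fun i => (c i : ℂ))
  simp only [Complex.conj_ofReal] at h
  exact_mod_cast h

theorem map_sub_comm {x y : G} (hx : x ∈ S) (hy : y ∈ S) : g (x - y) = g (y - x) := by
  have h := hg 2 ![x, y] (by simp [Fin.forall_fin_two, hx, hy]) ![1, Complex.I]
  have him := (Complex.le_def.mp h).2
  simp [Fin.sum_univ_two, Complex.mul_im] at him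
  linarith

theorem map_sub_le {x y : G} (hx : x ∈ S) (hy : y ∈ S) : g (x - y) ≤ g 0 := by
  have h := hg.sum_sum_mul_nonneg (r := ![x, y]) (by simp [Fin.forall_fin_two, hx, hy]) ![1, -1]
  simp [Fin.sum_univ_two] at h
  linarith [hg.map_sub_comm hx hy]

theorem map_neg {x : G} (h0 : 0 ∈ S) (hx : x ∈ S) : g (-x) = g x := by
  simpa using hg.map_sub_comm h0 hx

-- Cauchy–Schwarz for `δ_x - δ_y` and `δ_0` in the inner product `⟨δ_x, δ_y⟩ = g (x - y)`.
theorem sq_sub_le (h1 : g 0 = 1) (h0 : 0 ∈ S) {x y : G} (hx : x ∈ S) (hy : y ∈ S) :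
    (g x - g y) ^ 2 ≤ 2 * (1 - g (x - y)) := by
  have h := hg.sum_sum_mul_nonneg (r := ![0, x, y]) (by simp [Fin.forall_fin_succ, h0, hx, hy])
    ![g y - g x, 1, -1]
  simp only [Fin.sum_univ_three] at h
  simp [h1, hg.map_neg h0 hx, hg.map_neg h0 hy, ← hg.map_sub_comm hx hy] at h
  nlinarith

end IsPosDefOn

theorem pos_and_log_div_two_pow_le {a : ℕ → ℝ} (ha : ∀ n, 0 ≤ a n) (hsq : ∀ n, a n ≤ a (n + 1) ^ 2)
    (h0 : 0 < a 0) (n : ℕ) : 0 < a n ∧ log (a 0) / 2 ^ n ≤ log (a n) := by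
  induction n with
  | zero => simpa using h0
  | succ n ih =>
    obtain ⟨hpos, hlog⟩ := ih
    have hsq_pos : 0 < a (n + 1) ^ 2 := hpos.trans_le (hsq n)
    have hpos' : 0 < a (n + 1) := (ha _).lt_of_ne' fun h => by simp [h] at hsq_pos
    refine ⟨hpos', ?_⟩
    calc log (a 0) / 2 ^ (n + 1) = log (a 0) / 2 ^ n / 2 := by ring
      _ ≤ log (a n) / 2 := by gcongr
      _ ≤ log (a (n + 1) ^ 2) / 2 := by gcongr; exact hsq n
      _ = log (a (n + 1)) := by rw [log_pow]; ring

theorem one_sub_le_neg_log_div_two_pow {a : ℕ → ℝ} (ha : ∀ n, 0 ≤ a n)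
    (hsq : ∀ n, a n ≤ a (n + 1) ^ 2) (h0 : 0 < a 0) (n : ℕ) :
    1 - a n ≤ -log (a 0) / 2 ^ n := by
  obtain ⟨hpos, hlog⟩ := pos_and_log_div_two_pow_le ha hsq h0 n
  have := log_le_sub_one_of_pos hpos
  rw [neg_div]
  linarith

namespace dyadicSet

theorem div_two_pow_mem (m : ℤ) (n : ℕ) : (m : ℝ) / 2 ^ n ∈ dyadicSet := ⟨m, n, rfl⟩

theorem zero_mem : (0 : ℝ) ∈ dyadicSet := ⟨0, 0, by simp⟩

theorem sub_mem {x y : ℝ} (hx : x ∈ dyadicSet) (hy : y ∈ dyadicSet) : x - y ∈ dyadicSet := by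
  obtain ⟨m, n, rfl⟩ := hx
  obtain ⟨m', n', rfl⟩ := hy
  refine ⟨m * 2 ^ n' - m' * 2 ^ n, n + n', ?_⟩
  push_cast
  field_simp
  ring

theorem exists_eq_div_two_pow_add {r : ℝ} (hr : r ∈ dyadicSet) {n : ℕ} (hrn : |r| ≤ (2 ^ n)⁻¹) :
    ∃ (k : ℕ) (m : ℤ), |m| ≤ 2 ^ k ∧ r = m / 2 ^ (n + k) := by
  obtain ⟨a, p, rfl⟩ := hr
  refine ⟨p, a * 2 ^ n, ?_, by push_cast; field_simp; ring⟩
  rw [abs_div, abs_of_pos (by positivity : (0:ℝ) < 2 ^ p), div_le_iff₀ (by positivity)] at hrn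
  have : (|a * 2 ^ n| : ℝ) ≤ 2 ^ p := by
    rw [abs_mul, abs_of_pos (by positivity : (0:ℝ) < 2 ^ n)]
    calc |(a : ℝ)| * 2 ^ n ≤ (2 ^ n)⁻¹ * 2 ^ p * 2 ^ n := by gcongr
      _ = 2 ^ p := by field_simp
  exact_mod_cast this

end dyadicSet

theorem Int.exists_abs_sub_le {m : ℤ} {k : ℕ} (hm : |m| ≤ 2 ^ (k + 1)) :
    ∃ j : ℤ, |j| ≤ 1 ∧ |m - j * 2 ^ (k + 1)| ≤ 2 ^ k := by
  rw [pow_succ] at hm ⊢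
  have hk : (0 : ℤ) < 2 ^ k := by positivity
  generalize (2 : ℤ) ^ k = P at hm hk ⊢
  rw [abs_le] at hm
  by_cases hlo : m < -P
  · exact ⟨-1, by norm_num, abs_le.mpr ⟨by linarith, by linarith⟩⟩
  by_cases hhi : P < m
  · exact ⟨1, by norm_num, abs_le.mpr ⟨by linarith, by linarith⟩⟩
  exact ⟨0, by norm_num, abs_le.mpr ⟨by linarith, by linarith⟩⟩

theorem apply_div_two_pow_add_le {φ : ℝ → ℝ} {b : ℕ → ℝ} (hb : ∀ n, 0 ≤ b n) (hφ0 : φ 0 ≤ 0)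
    (hstep : ∀ (n : ℕ) (j : ℤ), |j| ≤ 1 → ∀ r ∈ dyadicSet,
      φ r ≤ φ (r - j / 2 ^ n) + (b n - b (n + 1))) (k : ℕ) :
    ∀ (n : ℕ) (m : ℤ), |m| ≤ 2 ^ k → φ (m / 2 ^ (n + k)) ≤ b n := by
  induction k with
  | zero =>
    intro n m hm
    have := hstep n m (by simpa using hm) _ (dyadicSet.div_two_pow_mem m n)
    simp only [add_zero, sub_self] at this ⊢
    linarith [hb (n + 1)]
  | succ k ih =>
    intro n m hm
    obtain ⟨j, hj, hm'⟩ := Int.exists_abs_sub_le hm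
    have hrw : (m : ℝ) / 2 ^ (n + (k + 1)) - j / 2 ^ n =
        ((m - j * 2 ^ (k + 1) : ℤ) : ℝ) / 2 ^ (n + 1 + k) := by
      push_cast; field_simp; ring
    have := hstep n j hj _ (dyadicSet.div_two_pow_mem m (n + (k + 1)))
    rw [hrw] at this
    linarith [ih (n + 1) _ hm']

theorem apply_le_of_abs_le_inv_two_pow {φ : ℝ → ℝ} {b : ℕ → ℝ} (hb : ∀ n, 0 ≤ b n)
    (hφ0 : φ 0 ≤ 0) (hstep : ∀ (n : ℕ) (j : ℤ), |j| ≤ 1 → ∀ r ∈ dyadicSet,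
      φ r ≤ φ (r - j / 2 ^ n) + (b n - b (n + 1)))
    {n : ℕ} {r : ℝ} (hr : r ∈ dyadicSet) (hrn : |r| ≤ (2 ^ n)⁻¹) : φ r ≤ b n := by
  obtain ⟨k, m, hm, rfl⟩ := dyadicSet.exists_eq_div_two_pow_add hr hrn
  exact apply_div_two_pow_add_le hb hφ0 hstep k n m hm

theorem Metric.uniformContinuousOn_of_tendsto {α β : Type*} [PseudoMetricSpace α]
    [PseudoMetricSpace β] {f : α → β} {s : Set α} {δ ε : ℕ → ℝ} (hδ : ∀ n, 0 < δ n)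
    (hε : Tendsto ε atTop (𝓝 0))
    (h : ∀ n, ∀ x ∈ s, ∀ y ∈ s, dist x y < δ n → dist (f x) (f y) ≤ ε n) :
    UniformContinuousOn f s := by
  rw [Metric.uniformContinuousOn_iff]
  intro e he
  obtain ⟨n, hn⟩ := (hε.eventually (gt_mem_nhds he)).exists
  exact ⟨δ n, hδ n, fun x hx y hy hxy => (h n x hx y hy hxy).trans_lt hn⟩

section Dyadic

variable {g : ℝ → ℝ} (hpd : IsPosDefOn g dyadicSet) (h0 : g 0 = 1)
  (hineq : ∀ r ∈ dyadicSet, |r| ≤ 1 / 2 → 0 ≤ g (2 * r) ∧ g (2 * r) ≤ g r ^ 2)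
include hpd h0 hineq

theorem one_sub_apply_int_div_two_pow_le (hg1 : 0 < g 1) (n : ℕ) {j : ℤ} (hj : |j| ≤ 1) :
    1 - g (j / 2 ^ n) ≤ -log (g 1) / 2 ^ n := by
  have hineq' (n : ℕ) := hineq (2 ^ (n + 1))⁻¹ (by simpa using dyadicSet.div_two_pow_mem 1 (n + 1))
    (by rw [abs_of_pos (by positivity), one_div]
        exact inv_anti₀ two_pos (le_self_pow₀ one_le_two n.succ_ne_zero))
  have hmul (n : ℕ) : 2 * ((2 : ℝ) ^ (n + 1))⁻¹ = (2 ^ n)⁻¹ := by rw [pow_succ]; field_simp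
  have hscale := one_sub_le_neg_log_div_two_pow (a := fun n => g (2 ^ n)⁻¹)
    (fun n => by simpa [hmul] using (hineq' n).1) (fun n => by simpa [hmul] using (hineq' n).2)
    (by simpa using hg1) n
  have hL : 0 ≤ -log (g 1) := by
    have := hpd.map_sub_le (by simpa using dyadicSet.div_two_pow_mem 1 0) dyadicSet.zero_mem
    rw [h0, sub_zero] at this
    exact neg_nonneg.mpr (log_nonpos hg1.le this)
  rw [abs_le] at hj
  obtain ⟨hj₁, hj₂⟩ := hj
  interval_cases j
  · have hneg : g (-(2 ^ n)⁻¹) = g (2 ^ n)⁻¹ :=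
      hpd.map_neg dyadicSet.zero_mem (by simpa using dyadicSet.div_two_pow_mem 1 n)
    simpa [neg_div, hneg] using hscale
  · simp only [Int.cast_zero, zero_div, h0, sub_self]; positivity
  · simpa using hscale

theorem exists_tendsto_zero_forall_one_sub_apply_le (hg1 : 0 < g 1) :
    ∃ b : ℕ → ℝ, Tendsto b atTop (𝓝 0) ∧
      ∀ n, ∀ r ∈ dyadicSet, |r| ≤ (2 ^ n)⁻¹ → 1 - g r ≤ b n := by
  set L := -log (g 1)
  set q := (√2)⁻¹
  have hq₀ : 0 < q := by positivity
  have hq₁ : q < 1 := inv_lt_one_of_one_lt₀ (by simp [Real.lt_sqrt])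
  have hq_sq (n : ℕ) : (q ^ n) ^ 2 = (2 ^ n)⁻¹ := by
    rw [← pow_mul, mul_comm, pow_mul, inv_pow, sq_sqrt zero_le_two, inv_pow]
  set C := √(2 * L) / (1 - q)
  have hstep (n : ℕ) (j : ℤ) (hj : |j| ≤ 1) (r : ℝ) (hr : r ∈ dyadicSet) :
      1 - g r ≤ 1 - g (r - j / 2 ^ n) + (C * q ^ n - C * q ^ (n + 1)) := by
    set s := r - j / 2 ^ n
    have hs : s ∈ dyadicSet := dyadicSet.sub_mem hr (dyadicSet.div_two_pow_mem j n)
    have hsr : s - r = ((-j : ℤ) : ℝ) / 2 ^ n := by simp only [s, sub_sub_cancel_left, Int.cast_neg, neg_div]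
    have hgeom : C * q ^ n - C * q ^ (n + 1) = √(2 * L) * q ^ n := by
      simp only [C]; field_simp [(by linarith : 1 - q ≠ 0)]; ring
    have hdiff : g s - g r ≤ √(2 * L) * q ^ n :=
      calc g s - g r ≤ √(2 * (1 - g (s - r))) :=
            (le_abs_self _).trans (abs_le_sqrt (hpd.sq_sub_le h0 dyadicSet.zero_mem hs hr))
        _ ≤ √(2 * (L / 2 ^ n)) := by
            gcongr
            rw [hsr]
            exact one_sub_apply_int_div_two_pow_le hpd h0 hineq hg1 n (by simpa using hj)
        _ = √(2 * L) * q ^ n := by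
            rw [div_eq_mul_inv, ← hq_sq, ← mul_assoc, sqrt_mul' _ (sq_nonneg _),
              sqrt_sq (by positivity)]
    linarith
  refine ⟨fun n => C * q ^ n, ?_, fun n r hr hrn => ?_⟩
  · simpa using (tendsto_pow_atTop_nhds_zero_of_lt_one hq₀.le hq₁).const_mul C
  · exact apply_le_of_abs_le_inv_two_pow (φ := fun r => 1 - g r) (b := fun n => C * q ^ n)
      (fun n => by positivity) (by simp [h0]) hstep hr hrn

end Dyadic

/-- Let `g` be a real-valued positive definite function on the (discrete) group `ℚ₂` of
dyadic rationals with `g(0) = 1`, `g(1) ≠ 0`, satisfying `0 ≤ g(2r) ≤ g(r)²` for all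
dyadic `r` with `|r| ≤ 1/2`. Then `g` is uniformly continuous on `ℚ₂` with respect to the
Euclidean metric of `ℝ`. -/
theorem stmt19 (g : ℝ → ℝ)
    (hpd : ∀ (n : ℕ) (r : Fin n → ℝ), (∀ i, r i ∈ dyadicSet) → ∀ c : Fin n → ℂ,
      0 ≤ ∑ i, ∑ j, c i * (starRingEnd ℂ) (c j) * (g (r i - r j) : ℂ))
    (h0 : g 0 = 1)
    (h1 : g 1 ≠ 0)
    (hineq : ∀ r ∈ dyadicSet, |r| ≤ 1 / 2 → 0 ≤ g (2 * r) ∧ g (2 * r) ≤ g r ^ 2) :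
    UniformContinuousOn g dyadicSet := by
  have hg1 : 0 < g 1 := by
    have := (hineq (1 / 2) (by simpa using dyadicSet.div_two_pow_mem 1 1) (by norm_num)).1
    norm_num at this
    exact this.lt_of_ne' h1
  obtain ⟨b, hb, hgb⟩ := exists_tendsto_zero_forall_one_sub_apply_le hpd h0 hineq hg1
  refine Metric.uniformContinuousOn_of_tendsto (δ := fun n => (2 ^ n)⁻¹)
    (ε := fun n => √(2 * b n)) (fun n => by positivity) ?_ fun n x hx y hy hxy => ?_
  · simpa using ((hb.const_mul 2).sqrt)
  · rw [dist_eq] at hxy ⊢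
    exact abs_le_sqrt <| (IsPosDefOn.sq_sub_le hpd h0 dyadicSet.zero_mem hx hy).trans <| by
      gcongr; exact hgb n _ (dyadicSet.sub_mem hx hy) hxy.le
end
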